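/- Let a2 > 0 and a ≥ max{1, 15√a2} and C_E > 0 be real numbers, and let t0 ≥ 2. Let g : [t0, ∞) → ℝ be measurable with |g(s)| ≤ 20 a2 and |g(s)| ≤ C_E s e^{−a s} for all s ≥ t0. Suppose Y : [t0, ∞) → ℝ is continuous, satisfies sup_{t ≥ t0} t^{−1} e^{a t} |Y(t) − 1| < ∞, and solves the integral equation Y(t) = 1 + ∫_t^∞ (s − t) g(s) Y(s) ds for all t ≥ t0. Then for all t ≥ t0, |Y(t) − 1| ≤ (8 C_E / a²) · t e^{−a t}. -/

import Mathlib

open MeasureTheory Real Filter Topology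

lemma aux_tendsto (a : ℝ) (ha : 0 < a) (n : ℕ) :
    Tendsto (fun s : ℝ => s ^ n * Real.exp (-a * s)) atTop (𝓝 0) := by
  have h := (Real.tendsto_pow_mul_exp_neg_atTop_nhds_zero n).comp
    (Filter.tendsto_id.const_mul_atTop ha)
  have h2 := h.div_const (a ^ n)
  rw [zero_div] at h2
  refine h2.congr fun s => ?_
  have han : (a : ℝ) ^ n ≠ 0 := by positivity
  field_simp [Function.comp, mul_pow]
  simp only [Function.comp, id]; ring

lemma aux_int (a t : ℝ) (ha : 0 < a) (ht : 0 ≤ t) :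
    IntegrableOn (fun s => (s - t) * s * Real.exp (-a * s)) (Set.Ioi t) volume ∧
    ∫ s in Set.Ioi t, (s - t) * s * Real.exp (-a * s)
      = Real.exp (-a * t) * (t / a ^ 2 + 2 / a ^ 3) := by
  have ha' : a ≠ 0 := ha.ne'
  set F : ℝ → ℝ := fun s => -(((s - t) * s / a + (2 * s - t) / a ^ 2 + 2 / a ^ 3)
      * Real.exp (-a * s)) with hFdef
  have hderiv : ∀ s : ℝ, HasDerivAt F ((s - t) * s * Real.exp (-a * s)) s := by
    intro s
    have he : HasDerivAt (fun s : ℝ => Real.exp (-a * s)) (Real.exp (-a * s) * (-a)) s := by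
      simpa using ((hasDerivAt_id s).const_mul (-a)).exp
    have hp := (((((hasDerivAt_id s).sub_const t).mul (hasDerivAt_id s)).div_const a).add
      ((((hasDerivAt_id s).const_mul 2).sub_const t).div_const (a ^ 2))).add_const
      ((2 : ℝ) / a ^ 3)
    have h := (hp.mul he).neg
    refine h.congr_deriv ?_
    simp only [id, Pi.add_apply, Pi.mul_apply]
    field_simp
    ring
  have htend : Tendsto F atTop (𝓝 0) := by
    have h2 := (aux_tendsto a ha 2).const_mul (1 / a)
    have h1 := (aux_tendsto a ha 1).const_mul (-t / a + 2 / a ^ 2)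
    have h0 := (aux_tendsto a ha 0).const_mul (-t / a ^ 2 + 2 / a ^ 3)
    have hsum := ((h2.add h1).add h0).neg
    simp only [mul_zero, add_zero, neg_zero] at hsum
    refine hsum.congr fun s => ?_
    simp only [hFdef, pow_zero, pow_one]
    ring
  have hnn : ∀ s ∈ Set.Ioi t, 0 ≤ (s - t) * s * Real.exp (-a * s) := by
    intro s hs
    have h1 : t < s := hs
    have h2 : (0:ℝ) ≤ s := le_trans ht h1.le
    have h3 : (0:ℝ) ≤ s - t := by linarith
    positivity
  have hcont : ContinuousWithinAt F (Set.Ici t) t :=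
    (hderiv t).continuousAt.continuousWithinAt
  have hint : IntegrableOn (fun s => (s - t) * s * Real.exp (-a * s)) (Set.Ioi t) volume :=
    integrableOn_Ioi_deriv_of_nonneg hcont (fun x hx => hderiv x) hnn htend
  refine ⟨hint, ?_⟩
  rw [integral_Ioi_of_hasDerivAt_of_tendsto hcont (fun x _ => hderiv x) hint htend]
  simp only [hFdef]
  field_simp
  ring

/-- estimate for ∂X/∂x: if `|g(s)| ≤ 20 a2` and
`|g(s)| ≤ C_E s e^{−a s}` for `s ≥ t0`, and the continuous function `Y`, with
`sup_{t ≥ t0} t^{−1} e^{a t} |Y(t) − 1| < ∞`, solves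
`Y(t) = 1 + ∫_t^∞ (s − t) g(s) Y(s) ds`, then
`|Y(t) − 1| ≤ (8 C_E / a²) t e^{−a t}` for all `t ≥ t0`. -/
theorem dXdx_estimate
    (a a2 CE t0 : ℝ) (ha2 : 0 < a2) (ha : max 1 (15 * Real.sqrt a2) ≤ a)
    (hCE : 0 < CE) (ht0 : 2 ≤ t0)
    (g : ℝ → ℝ) (hgm : Measurable g)
    (hg1 : ∀ s ≥ t0, |g s| ≤ 20 * a2)
    (hg2 : ∀ s ≥ t0, |g s| ≤ CE * s * Real.exp (-a * s))
    (Y : ℝ → ℝ) (hYc : ContinuousOn Y (Set.Ici t0))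
    (hYfin : BddAbove
      (Set.range fun t : Set.Ici t0 => Real.exp (a * t) * |Y t - 1| / (t : ℝ)))
    (hYeq : ∀ t ≥ t0, Y t = 1 + ∫ s in Set.Ioi t, (s - t) * g s * Y s) :
    ∀ t ≥ t0, |Y t - 1| ≤ 8 * CE / a ^ 2 * t * Real.exp (-a * t) := by
  have ha1 : (1:ℝ) ≤ a := le_trans (le_max_left _ _) ha
  have hapos : (0:ℝ) < a := lt_of_lt_of_le one_pos ha1
  have ha2sq : 225 * a2 ≤ a ^ 2 := by
    have h1 : 15 * Real.sqrt a2 ≤ a := le_trans (le_max_right _ _) ha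
    have h2 : (0:ℝ) ≤ 15 * Real.sqrt a2 := by positivity
    have h3 := mul_self_le_mul_self h2 h1
    have h4 : Real.sqrt a2 * Real.sqrt a2 = a2 := Real.mul_self_sqrt ha2.le
    nlinarith
  haveI : Nonempty (Set.Ici t0) := ⟨⟨t0, Set.self_mem_Ici⟩⟩
  set M : ℝ := sSup (Set.range fun t : Set.Ici t0 => Real.exp (a * t) * |Y t - 1| / (t : ℝ))
    with hMdef
  have hM1 : ∀ t ≥ t0, Real.exp (a * t) * |Y t - 1| / t ≤ M :=
    fun t ht => le_csSup hYfin ⟨⟨t, ht⟩, rfl⟩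
  have hM0 : 0 ≤ M := by
    refine le_trans ?_ (hM1 t0 le_rfl)
    have : (0:ℝ) < t0 := by linarith
    positivity
  have hM2 : ∀ t ≥ t0, |Y t - 1| ≤ M * t * Real.exp (-a * t) := by
    intro t ht
    have htpos : (0:ℝ) < t := by linarith
    have h := hM1 t ht
    rw [div_le_iff₀ htpos] at h
    have hexp : Real.exp (-a * t) = (Real.exp (a * t))⁻¹ := by
      rw [← Real.exp_neg]; ring_nf
    calc |Y t - 1| = (Real.exp (a * t) * |Y t - 1|) * Real.exp (-a * t) := by
          rw [hexp]; field_simp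
      _ ≤ (M * t) * Real.exp (-a * t) :=
          mul_le_mul_of_nonneg_right h (Real.exp_pos _).le
      _ = M * t * Real.exp (-a * t) := by ring
  set K : ℝ := CE + 20 * a2 * M with hKdef
  have hKpos : 0 < K := by positivity
  -- main pointwise bound
  have hkey : ∀ t ≥ t0, |Y t - 1| ≤ K * (Real.exp (-a * t) * (t / a ^ 2 + 2 / a ^ 3)) := by
    intro t ht
    have htpos : (0:ℝ) < t := by linarith
    obtain ⟨hint, hval⟩ := aux_int a t hapos htpos.le
    have heq : Y t - 1 = ∫ s in Set.Ioi t, (s - t) * g s * Y s := by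
      rw [hYeq t ht]; ring
    rw [heq]
    have hintK : IntegrableOn (fun s => K * ((s - t) * s * Real.exp (-a * s)))
        (Set.Ioi t) volume := hint.const_mul K
    have hbound : ∀ᵐ s ∂(volume.restrict (Set.Ioi t)),
        ‖(s - t) * g s * Y s‖ ≤ K * ((s - t) * s * Real.exp (-a * s)) := by
      filter_upwards [ae_restrict_mem measurableSet_Ioi] with s hs
      have hst : t < s := hs
      have hs0 : t0 ≤ s := le_trans ht hst.le
      have hspos : (0:ℝ) < s := lt_trans htpos hst
      have hgY : |g s * Y s| ≤ K * (s * Real.exp (-a * s)) := by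
        have h1 : |g s * Y s| ≤ |g s| + |g s| * |Y s - 1| := by
          have : |g s * Y s| = |g s| * |Y s| := abs_mul _ _
          rw [this]
          have h2 : |Y s| ≤ 1 + |Y s - 1| := by
            calc |Y s| = |1 + (Y s - 1)| := by ring_nf
              _ ≤ 1 + |Y s - 1| := by
                refine le_trans (abs_add_le _ _) ?_; simp
          nlinarith [abs_nonneg (g s), abs_nonneg (Y s - 1)]
        have h3 : |g s| * |Y s - 1| ≤ (20 * a2) * (M * s * Real.exp (-a * s)) :=
          mul_le_mul (hg1 s hs0) (hM2 s hs0) (abs_nonneg _) (by positivity)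
        have h4 := hg2 s hs0
        calc |g s * Y s| ≤ |g s| + |g s| * |Y s - 1| := h1
          _ ≤ CE * s * Real.exp (-a * s) + (20 * a2) * (M * s * Real.exp (-a * s)) := by
              linarith
          _ = K * (s * Real.exp (-a * s)) := by rw [hKdef]; ring
      have habs : ‖(s - t) * g s * Y s‖ = (s - t) * |g s * Y s| := by
        rw [Real.norm_eq_abs, mul_assoc, abs_mul, abs_of_nonneg (by linarith : (0:ℝ) ≤ s - t)]
      rw [habs]
      calc (s - t) * |g s * Y s| ≤ (s - t) * (K * (s * Real.exp (-a * s))) :=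
            mul_le_mul_of_nonneg_left hgY (by linarith)
        _ = K * ((s - t) * s * Real.exp (-a * s)) := by ring
    calc ‖∫ s in Set.Ioi t, (s - t) * g s * Y s‖
        ≤ ∫ s in Set.Ioi t, K * ((s - t) * s * Real.exp (-a * s)) :=
          norm_integral_le_of_norm_le hintK hbound
      _ = K * ∫ s in Set.Ioi t, (s - t) * s * Real.exp (-a * s) := integral_const_mul _ _
      _ = K * (Real.exp (-a * t) * (t / a ^ 2 + 2 / a ^ 3)) := by rw [hval]
  -- consequence: M ≤ 2K/a²
  have hMle : M ≤ 2 * K / a ^ 2 := by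
    refine csSup_le (Set.range_nonempty _) ?_
    rintro x ⟨⟨t, ht⟩, rfl⟩
    have htpos : (0:ℝ) < t := by linarith [Set.mem_Ici.mp ht]
    have ht' : t0 ≤ t := ht
    have h := hkey t ht'
    have hb : t / a ^ 2 + 2 / a ^ 3 ≤ 2 * t / a ^ 2 := by
      have h1 : 2 / a ^ 3 ≤ t / a ^ 2 := by
        rw [div_le_div_iff₀ (by positivity) (by positivity)]
        have h2t : (2:ℝ) ≤ t := by linarith
        nlinarith [mul_le_mul_of_nonneg_right h2t (by positivity : (0:ℝ) ≤ a ^ 3),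
          mul_le_mul_of_nonneg_left ha1 (by positivity : (0:ℝ) ≤ 2 * a ^ 2)]
      have h2 : 2 * t / a ^ 2 = t / a ^ 2 + t / a ^ 2 := by ring
      linarith
    have h2 : |Y t - 1| ≤ K * Real.exp (-a * t) * (2 * t / a ^ 2) := by
      calc |Y t - 1| ≤ K * (Real.exp (-a * t) * (t / a ^ 2 + 2 / a ^ 3)) := h
        _ ≤ K * (Real.exp (-a * t) * (2 * t / a ^ 2)) := by
            refine mul_le_mul_of_nonneg_left ?_ hKpos.le
            exact mul_le_mul_of_nonneg_left hb (Real.exp_pos _).le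
        _ = K * Real.exp (-a * t) * (2 * t / a ^ 2) := by ring
    rw [div_le_iff₀ htpos]
    have hee : Real.exp (a * t) * Real.exp (-a * t) = 1 := by
      rw [← Real.exp_add]; ring_nf; exact Real.exp_zero
    calc Real.exp (a * t) * |Y t - 1|
        ≤ Real.exp (a * t) * (K * Real.exp (-a * t) * (2 * t / a ^ 2)) :=
          mul_le_mul_of_nonneg_left h2 (Real.exp_pos _).le
      _ = (Real.exp (a * t) * Real.exp (-a * t)) * (K * (2 * t / a ^ 2)) := by ring
      _ = K * (2 * t / a ^ 2) := by rw [hee]; ring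
      _ = 2 * K / a ^ 2 * t := by ring
  -- solve for M
  have hMfinal : M ≤ 8 * CE / a ^ 2 := by
    rw [le_div_iff₀ (by positivity : (0:ℝ) < a ^ 2)]
    rw [le_div_iff₀ (by positivity : (0:ℝ) < a ^ 2)] at hMle
    rw [hKdef] at hMle
    have hmm := mul_le_mul_of_nonneg_right ha2sq hM0
    nlinarith
  intro t ht
  calc |Y t - 1| ≤ M * t * Real.exp (-a * t) := hM2 t ht
    _ ≤ (8 * CE / a ^ 2) * t * Real.exp (-a * t) := by
        have htpos : (0:ℝ) < t := by linarith
        have := mul_le_mul_of_nonneg_right hMfinal htpos.le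
        exact mul_le_mul_of_nonneg_right this (Real.exp_pos _).le
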